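/- arXiv:2006.11206 — 7 statements merged into one kernel-verified Lean document; each statement's English description precedes it below -/
import Mathlib

section
/- Let A be an m×n complex matrix all of whose entries have absolute value at most 1, and suppose that ‖A*Av‖∞ ≥ k‖v‖∞ for all v ∈ ℂⁿ (A is k-Hadamard). Then for every v ∈ ℂⁿ, ‖v‖₁ · ‖Av‖₁ ≥ k · ‖v‖∞ · ‖Av‖∞. -/
/-!
A matrix with entries of modulus at most `1` maps `ℓ¹` into `ℓ^∞` with norm at most `1`; this
applies to both `A` and `Aᴴ`. Hence `k‖v‖∞ ≤ ‖Aᴴ(Av)‖∞ ≤ ‖Av‖₁` and `‖Av‖∞ ≤ ‖v‖₁`, and the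
theorem is the product of these two inequalities.
-/

open Finset Matrix

section EntrywiseBounded

variable {R ι κ : Type*} [NonUnitalSeminormedRing R] [Fintype κ]

theorem norm_mulVec_apply_le_sum_norm {B : Matrix ι κ R} (hB : ∀ i j, ‖B i j‖ ≤ 1)
    (w : κ → R) (i : ι) : ‖(B *ᵥ w) i‖ ≤ ∑ j, ‖w j‖ :=
  calc ‖∑ j, B i j * w j‖ ≤ ∑ j, ‖B i j * w j‖ := norm_sum_le _ _
    _ ≤ ∑ j, ‖w j‖ := sum_le_sum fun j _ =>
        (norm_mul_le _ _).trans (mul_le_of_le_one_left (norm_nonneg _) (hB i j))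

theorem iSup_norm_mulVec_le_sum_norm {B : Matrix ι κ R} (hB : ∀ i j, ‖B i j‖ ≤ 1)
    (w : κ → R) : ⨆ i, ‖(B *ᵥ w) i‖ ≤ ∑ j, ‖w j‖ :=
  Real.iSup_le (norm_mulVec_apply_le_sum_norm hB w) (sum_nonneg fun _ _ => norm_nonneg _)

end EntrywiseBounded

theorem norm_conjTranspose_apply_le_one {R ι κ : Type*} [SeminormedAddCommGroup R] [StarAddMonoid R]
    [NormedStarGroup R] {B : Matrix ι κ R} (hB : ∀ i j, ‖B i j‖ ≤ 1) (i : κ) (j : ι) :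
    ‖Bᴴ i j‖ ≤ 1 := by
  rw [conjTranspose_apply, norm_star]
  exact hB j i

theorem hadamard_uncertainty_general (m n : ℕ) (k : ℝ)
    (A : Matrix (Fin m) (Fin n) ℂ)
    (hbd : ∀ i j, ‖A i j‖ ≤ 1)
    (hHad : ∀ v : Fin n → ℂ, k * (⨆ i, ‖v i‖) ≤ ⨆ i, ‖(Aᴴ * A).mulVec v i‖) :
    ∀ v : Fin n → ℂ,
      k * ((⨆ i, ‖v i‖) * ⨆ i, ‖A.mulVec v i‖) ≤
        (∑ i, ‖v i‖) * ∑ i, ‖A.mulVec v i‖ := by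
  intro v
  have hv_inf : k * (⨆ i, ‖v i‖) ≤ ∑ i, ‖(A *ᵥ v) i‖ := by
    refine (hHad v).trans ?_
    rw [← mulVec_mulVec]
    exact iSup_norm_mulVec_le_sum_norm (norm_conjTranspose_apply_le_one hbd) _
  have hAv_inf : ⨆ i, ‖(A *ᵥ v) i‖ ≤ ∑ i, ‖v i‖ := iSup_norm_mulVec_le_sum_norm hbd v
  have hAv_inf_nonneg : 0 ≤ ⨆ i, ‖(A *ᵥ v) i‖ := Real.iSup_nonneg fun _ => norm_nonneg _
  calc k * ((⨆ i, ‖v i‖) * ⨆ i, ‖(A *ᵥ v) i‖)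
      = k * (⨆ i, ‖v i‖) * ⨆ i, ‖(A *ᵥ v) i‖ := (mul_assoc _ _ _).symm
    _ ≤ (∑ i, ‖(A *ᵥ v) i‖) * ∑ i, ‖v i‖ :=
        mul_le_mul hv_inf hAv_inf hAv_inf_nonneg (sum_nonneg fun _ _ => norm_nonneg _)
    _ = (∑ i, ‖v i‖) * ∑ i, ‖(A *ᵥ v) i‖ := mul_comm _ _

/-- If `A` is an `m × n` complex matrix with all entries of absolute value at most `1`
and `‖AᴴAv‖∞ ≥ k‖v‖∞` for all `v` (i.e. `A` is `k`-Hadamard), then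
`‖v‖₁‖Av‖₁ ≥ k‖v‖∞‖Av‖∞` for every `v`. -/
theorem hadamard_uncertainty (m n : ℕ) (k : ℝ) (hk : 0 < k)
    (A : Matrix (Fin m) (Fin n) ℂ)
    (hbd : ∀ i j, ‖A i j‖ ≤ 1)
    (hHad : ∀ v : Fin n → ℂ, k * (⨆ i, ‖v i‖) ≤ ⨆ i, ‖(Aᴴ * A).mulVec v i‖) :
    ∀ v : Fin n → ℂ,
      k * ((⨆ i, ‖v i‖) * ⨆ i, ‖A.mulVec v i‖) ≤
        (∑ i, ‖v i‖) * ∑ i, ‖A.mulVec v i‖ :=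
  hadamard_uncertainty_general m n k A hbd hHad
end

section
/- Let A be an m×n complex k-Hadamard matrix (all entries of absolute value at most 1 and ‖A*Av‖∞ ≥ k‖v‖∞ for all v). Then for any nonzero v ∈ ℂⁿ, |supp(v)| · |supp(Av)| ≥ k, where supp denotes the set of nonzero coordinates. -/
open Finset Matrix

/-! With entries of modulus at most one, every coordinate of `A v` is a sum of `|supp v|` terms
of size at most `‖v‖∞`, so `‖A v‖∞ ≤ |supp v| ‖v‖∞`. Applying this to `A` and then to `Aᴴ`
(evaluated at `A v`) gives `k ‖v‖∞ ≤ ‖Aᴴ A v‖∞ ≤ |supp A v| |supp v| ‖v‖∞`. -/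

theorem Pi.norm_eq_ciSup {ι E : Type*} [Fintype ι] [SeminormedAddCommGroup E] (f : ι → E) :
    ‖f‖ = ⨆ i, ‖f i‖ := by
  rw [← PiLp.norm_toLp, PiLp.norm_eq_ciSup]

theorem Matrix.norm_mulVec_le_ncard_support_mul_norm {R m n : Type*} [Fintype m] [Fintype n]
    [SeminormedRing R] {A : Matrix m n R} (hA : ∀ i j, ‖A i j‖ ≤ 1) (v : n → R) :
    ‖A *ᵥ v‖ ≤ (Function.support v).ncard * ‖v‖ := by
  classical
  have hterm : ∀ i j, ‖A i j * v j‖ ≤ if v j ≠ 0 then ‖v‖ else 0 := fun i j => by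
    split_ifs with hj
    · exact (norm_mul_le _ _).trans <|
        (mul_le_mul (hA i j) (norm_le_pi_norm v j) (norm_nonneg _) zero_le_one).trans_eq (one_mul _)
    · simp [not_not.mp hj]
  have hsupp : Function.support v = ↑({j | v j ≠ 0} : Finset n) := by ext; simp
  refine (pi_norm_le_iff_of_nonneg (by positivity)).mpr fun i => ?_
  calc ‖(A *ᵥ v) i‖ ≤ ∑ j, ‖A i j * v j‖ := norm_sum_le _ _
    _ ≤ ∑ j, if v j ≠ 0 then ‖v‖ else 0 := sum_le_sum fun j _ => hterm i j
    _ = (Function.support v).ncard * ‖v‖ := by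
      rw [sum_ite, sum_const_zero, add_zero, sum_const, nsmul_eq_mul, hsupp, Set.ncard_coe_finset]

theorem support_size_uncertainty_general (m n : ℕ) (k : ℝ)
    (A : Matrix (Fin m) (Fin n) ℂ)
    (hbd : ∀ i j, ‖A i j‖ ≤ 1)
    (hHad : ∀ v : Fin n → ℂ, k * (⨆ i, ‖v i‖) ≤ ⨆ i, ‖(Aᴴ * A).mulVec v i‖)
    (v : Fin n → ℂ) (hv : v ≠ 0) :
    k ≤ ((Function.support v).ncard : ℝ) *
        ((Function.support (A.mulVec v)).ncard : ℝ) := by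
  have hbd_star : ∀ i j, ‖Aᴴ i j‖ ≤ 1 := fun i j => by simpa using hbd j i
  have key : k * ‖v‖ ≤ (Function.support v).ncard * (Function.support (A *ᵥ v)).ncard * ‖v‖ :=
    calc k * ‖v‖ ≤ ‖Aᴴ *ᵥ (A *ᵥ v)‖ := by
          simpa only [Pi.norm_eq_ciSup, mulVec_mulVec] using hHad v
      _ ≤ (Function.support (A *ᵥ v)).ncard * ‖A *ᵥ v‖ :=
          norm_mulVec_le_ncard_support_mul_norm hbd_star _
      _ ≤ (Function.support (A *ᵥ v)).ncard * ((Function.support v).ncard * ‖v‖) := by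
          gcongr; exact norm_mulVec_le_ncard_support_mul_norm hbd v
      _ = _ := by ring
  exact le_of_mul_le_mul_right key (norm_pos_iff.mpr hv)

/-- Support-size uncertainty principle: if `A` is a `k`-Hadamard `m × n` complex matrix,
then for any nonzero `v`, `|supp(v)| · |supp(Av)| ≥ k`. -/
theorem support_size_uncertainty (m n : ℕ) (k : ℝ) (hk : 0 < k)
    (A : Matrix (Fin m) (Fin n) ℂ)
    (hbd : ∀ i j, ‖A i j‖ ≤ 1)
    (hHad : ∀ v : Fin n → ℂ, k * (⨆ i, ‖v i‖) ≤ ⨆ i, ‖(Aᴴ * A).mulVec v i‖)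
    (v : Fin n → ℂ) (hv : v ≠ 0) :
    k ≤ ((Function.support v).ncard : ℝ) *
        ((Function.support (A.mulVec v)).ncard : ℝ) :=
  support_size_uncertainty_general m n k A hbd hHad v hv
end

section
/- Let G be a finite abelian group, f : G → ℂ a nonzero function, and f̂ : Ĝ → ℂ its Fourier transform defined by f̂(χ) = Σ_{x∈G} f(x)·conj(χ(x)). Then |supp(f)| · |supp(f̂)| ≥ |G|. -/
open Finset

/-!
Let `M = ‖f x₀‖` be the maximum of `‖f‖`. Fourier inversion writes `|G| · f x₀` as the sum of
`f̂ χ · χ x₀` over the support of `f̂`, and since characters take unit values each such term has norm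
at most `|supp f| · M`. Hence `|G| · M ≤ |supp f̂| · |supp f| · M`, and `M > 0` as `f ≠ 0`.
-/

theorem norm_sum_mul_le_ncard_support_mul {ι R : Type*} [Fintype ι] [SeminormedRing R]
    {g u : ι → R} {C : ℝ} (hg : ∀ i, ‖g i‖ ≤ C) (hu : ∀ i, ‖u i‖ ≤ 1) :
    ‖∑ i, g i * u i‖ ≤ (Function.support g).ncard * C := by
  classical
  rw [← sum_filter_of_ne (p := fun i => g i ≠ 0) fun i _ h hg0 => h (by simp [hg0]),
    Set.ncard_eq_toFinset_card', Function.support, Set.toFinset_ofPred]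
  refine (norm_sum_le_of_le _ fun i _ => ?_).trans_eq (by rw [sum_const, nsmul_eq_mul])
  exact (norm_mul_le _ _).trans <| (mul_le_of_le_one_right (norm_nonneg _) (hu i)).trans (hg i)

namespace MonoidHom

theorem norm_apply_eq_one {G : Type*} [Group G] [Finite G] (χ : G →* ℂ) (g : G) :
    ‖χ g‖ = 1 := by
  have := Fintype.ofFinite G
  refine Complex.norm_eq_one_of_pow_eq_one (n := Fintype.card G) ?_ Fintype.card_ne_zero
  rw [← map_pow, pow_card_eq_one, map_one]

theorem conj_apply {G : Type*} [Group G] [Finite G] (χ : G →* ℂ) (g : G) :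
    starRingEnd ℂ (χ g) = χ g⁻¹ := by
  rw [← Complex.inv_eq_conj (χ.norm_apply_eq_one g)]
  exact (eq_inv_of_mul_eq_one_left (by rw [← map_mul, inv_mul_cancel, map_one])).symm

variable (G : Type*) [CommGroup G]

def addCharEquiv : AddChar (Additive G) ℂ ≃ (G →* ℂ) :=
  AddChar.toMonoidHomEquiv.trans (MulEquiv.multiplicativeAdditive G).monoidHomCongrLeftEquiv

noncomputable instance [Finite G] : Fintype (G →* ℂ) := Fintype.ofEquiv _ (addCharEquiv G)

variable {G}

theorem sum_apply_eq_ite [Fintype G] [DecidableEq G] (g : G) :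
    ∑ χ : G →* ℂ, χ g = if g = 1 then (Fintype.card G : ℂ) else 0 := by
  rw [← (addCharEquiv G).sum_comp]
  exact (AddChar.sum_apply_eq_ite (Additive.ofMul g)).trans (by simp)

end MonoidHom

section

variable {G : Type*} [CommGroup G] [Fintype G]

noncomputable def charFourier (f : G → ℂ) (χ : G →* ℂ) : ℂ := ∑ x, f x * starRingEnd ℂ (χ x)

theorem sum_charFourier_mul_apply (f : G → ℂ) (x : G) :
    ∑ χ, charFourier f χ * χ x = Fintype.card G * f x := by
  classical
  calc ∑ χ, charFourier f χ * χ x = ∑ y, f y * ∑ χ : G →* ℂ, χ (y⁻¹ * x) := by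
        simp only [charFourier, sum_mul, mul_sum, MonoidHom.conj_apply, mul_assoc, ← map_mul]
        exact sum_comm
    _ = Fintype.card G * f x := by
        simp_rw [MonoidHom.sum_apply_eq_ite, inv_mul_eq_one]
        simp [mul_comm]

theorem norm_charFourier_le {f : G → ℂ} {C : ℝ} (hf : ∀ x, ‖f x‖ ≤ C) (χ : G →* ℂ) :
    ‖charFourier f χ‖ ≤ (Function.support f).ncard * C :=
  norm_sum_mul_le_ncard_support_mul hf fun x => by
    rw [RCLike.norm_conj, χ.norm_apply_eq_one]

end

/-- Donoho–Stark uncertainty principle: for a finite abelian group `G` and a nonzero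
`f : G → ℂ` with Fourier transform `f̂(χ) = ∑ₓ f(x)·conj(χ(x))` (over characters
`χ : G →* ℂ`, which automatically take unit-circle values), one has
`|supp(f)| · |supp(f̂)| ≥ |G|`. -/
theorem donoho_stark (G : Type*) [CommGroup G] [Fintype G]
    (f : G → ℂ) (hf : f ≠ 0) :
    Fintype.card G ≤
      (Function.support f).ncard *
        (Function.support
          (fun χ : G →* ℂ => ∑ x, f x * (starRingEnd ℂ) (χ x))).ncard := by
  obtain ⟨x₀, hx₀⟩ := Finite.exists_max fun x => ‖f x‖
  have hpos : 0 < ‖f x₀‖ := by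
    obtain ⟨y, hy⟩ := Function.ne_iff.mp hf
    exact (norm_pos_iff.mpr hy).trans_le (hx₀ y)
  have key : (Fintype.card G : ℝ) * ‖f x₀‖ ≤
      (Function.support (charFourier f)).ncard * ((Function.support f).ncard * ‖f x₀‖) := by
    calc (Fintype.card G : ℝ) * ‖f x₀‖ = ‖∑ χ, charFourier f χ * χ x₀‖ := by
          rw [sum_charFourier_mul_apply, norm_mul, Complex.norm_natCast]
      _ ≤ _ := norm_sum_mul_le_ncard_support_mul (norm_charFourier_le hx₀)
          fun χ => (χ.norm_apply_eq_one x₀).le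
  rw [← mul_assoc, mul_comm (Function.support (charFourier f)).ncard.cast] at key
  exact_mod_cast le_of_mul_le_mul_right key hpos
end

section
/- Let A be an m×n complex k-Hadamard matrix and v ∈ ℂⁿ nonzero. For ε, η ∈ [0,1), the (1,ε)-support size of v times the (1,η)-support size of Av is at least k(1−ε)(1−η). -/
/-!
Write `‖·‖` for the sup norm. Every `T` witnessing the `(1,δ)`-support carries at least
`(1-δ)‖u‖₁` of the mass, so `(1-δ)‖u‖₁ ≤ |supp¹_δ(u)| ‖u‖`. Since all entries of `A` are bounded
by `1`, `k‖v‖ ≤ ‖A*Av‖ ≤ ‖Av‖₁` and `‖Av‖ ≤ ‖v‖₁`; multiplying the four inequalities and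
cancelling `‖v‖ ‖Av‖ > 0` gives the theorem.
-/

open Finset Matrix

/-- The `(1,δ)`-support size of `u`: the minimum cardinality of a set `T` of coordinates
such that `‖u[Tᶜ]‖₁ ≤ δ‖u‖₁`. -/
noncomputable def suppSize1 {n : ℕ} (δ : ℝ) (u : Fin n → ℂ) : ℕ :=
  sInf {s : ℕ | ∃ T : Finset (Fin n), T.card = s ∧
    ∑ i ∈ Tᶜ, ‖u i‖ ≤ δ * ∑ i, ‖u i‖}

lemma Pi.norm_eq_iSup_norm {ι : Type*} [Fintype ι] {β : ι → Type*}
    [∀ i, SeminormedAddCommGroup (β i)] (f : ∀ i, β i) : ‖f‖ = ⨆ i, ‖f i‖ := by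
  rw [← PiLp.norm_toLp, PiLp.norm_eq_ciSup]

lemma norm_mulVec_le_sum_norm {ι κ R : Type*} [Fintype ι] [Fintype κ] [SeminormedRing R]
    {B : Matrix ι κ R} (hB : ∀ i j, ‖B i j‖ ≤ 1) (u : κ → R) :
    ‖B *ᵥ u‖ ≤ ∑ j, ‖u j‖ := by
  refine (pi_norm_le_iff_of_nonneg (by positivity)).2 fun i => ?_
  calc ‖∑ j, B i j * u j‖ ≤ ∑ j, ‖B i j‖ * ‖u j‖ :=
        (norm_sum_le _ _).trans (sum_le_sum fun j _ => norm_mul_le _ _)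
    _ ≤ ∑ j, ‖u j‖ :=
        sum_le_sum fun j _ => mul_le_of_le_one_left (norm_nonneg _) (hB i j)

lemma mul_norm_le_sum_norm_mulVec {ι κ R : Type*} [Fintype ι] [Fintype κ] [SeminormedRing R]
    [StarRing R] [NormedStarGroup R] {A : Matrix ι κ R} (hA : ∀ i j, ‖A i j‖ ≤ 1) {k : ℝ}
    {v : κ → R} (hv : k * ‖v‖ ≤ ‖(Aᴴ * A) *ᵥ v‖) : k * ‖v‖ ≤ ∑ i, ‖(A *ᵥ v) i‖ := by
  refine hv.trans ?_
  rw [← mulVec_mulVec]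
  exact norm_mulVec_le_sum_norm (fun j i => by rw [conjTranspose_apply, norm_star]; exact hA i j) _

lemma exists_card_eq_suppSize1 {n : ℕ} {δ : ℝ} (hδ : 0 ≤ δ) (u : Fin n → ℂ) :
    ∃ T : Finset (Fin n), T.card = suppSize1 δ u ∧ ∑ i ∈ Tᶜ, ‖u i‖ ≤ δ * ∑ i, ‖u i‖ :=
  Nat.sInf_mem (s := {s | ∃ T : Finset (Fin n), T.card = s ∧ ∑ i ∈ Tᶜ, ‖u i‖ ≤ δ * ∑ i, ‖u i‖})
    ⟨_, univ, rfl, by simp only [compl_univ, sum_empty]; positivity⟩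

lemma one_sub_mul_sum_norm_le_suppSize1_mul_norm {n : ℕ} {δ : ℝ} (hδ : 0 ≤ δ)
    (u : Fin n → ℂ) : (1 - δ) * ∑ i, ‖u i‖ ≤ suppSize1 δ u * ‖u‖ := by
  obtain ⟨T, hT, hTc⟩ := exists_card_eq_suppSize1 hδ u
  calc (1 - δ) * ∑ i, ‖u i‖ ≤ ∑ i ∈ T, ‖u i‖ := by
        linarith [sum_add_sum_compl T fun i => ‖u i‖]
    _ ≤ T.card • ‖u‖ := sum_le_card_nsmul _ _ _ fun i _ => norm_le_pi_norm u i
    _ = suppSize1 δ u * ‖u‖ := by rw [nsmul_eq_mul, hT]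

theorem approx_support_uncertainty_general (m n : ℕ) (k : ℝ)
    (A : Matrix (Fin m) (Fin n) ℂ)
    (hbd : ∀ i j, ‖A i j‖ ≤ 1)
    (hHad : ∀ v : Fin n → ℂ, k * (⨆ i, ‖v i‖) ≤ ⨆ i, ‖(Aᴴ * A).mulVec v i‖)
    (v : Fin n → ℂ) (hv : v ≠ 0)
    (ε η : ℝ) (hε : ε ∈ Set.Ico (0 : ℝ) 1) (hη : η ∈ Set.Ico (0 : ℝ) 1) :
    k * (1 - ε) * (1 - η) ≤
      (suppSize1 ε v : ℝ) * (suppSize1 η (A.mulVec v) : ℝ) := by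
  obtain ⟨hε0, hε1⟩ := hε
  obtain ⟨hη0, hη1⟩ := hη
  rcases le_or_gt k 0 with hk | hk
  · exact (mul_nonpos_of_nonpos_of_nonneg (mul_nonpos_of_nonpos_of_nonneg hk (by linarith))
      (by linarith)).trans (by positivity)
  set w := A *ᵥ v
  have hkv : k * ‖v‖ ≤ ∑ i, ‖w i‖ :=
    mul_norm_le_sum_norm_mulVec hbd (by simpa only [← Pi.norm_eq_iSup_norm] using hHad v)
  have hwv : ‖w‖ ≤ ∑ j, ‖v j‖ := norm_mulVec_le_sum_norm hbd v
  have hv_pos : 0 < ‖v‖ := norm_pos_iff.2 hv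
  have hw_pos : 0 < ‖w‖ := by
    refine norm_pos_iff.2 fun hw => ?_
    simp only [hw, Pi.zero_apply, norm_zero, sum_const_zero] at hkv
    exact (mul_pos hk hv_pos).not_ge hkv
  refine le_of_mul_le_mul_right ?_ (mul_pos hv_pos hw_pos)
  calc k * (1 - ε) * (1 - η) * (‖v‖ * ‖w‖)
      = (1 - ε) * (1 - η) * ((k * ‖v‖) * ‖w‖) := by ring
    _ ≤ (1 - ε) * (1 - η) * ((∑ i, ‖w i‖) * ∑ j, ‖v j‖) := by gcongr
    _ = ((1 - ε) * ∑ j, ‖v j‖) * ((1 - η) * ∑ i, ‖w i‖) := by ring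
    _ ≤ (suppSize1 ε v * ‖v‖) * (suppSize1 η w * ‖w‖) :=
        mul_le_mul (one_sub_mul_sum_norm_le_suppSize1_mul_norm hε0 v)
          (one_sub_mul_sum_norm_le_suppSize1_mul_norm hη0 w)
          (mul_nonneg (by linarith) (by positivity)) (by positivity)
    _ = suppSize1 ε v * suppSize1 η w * (‖v‖ * ‖w‖) := by ring

/-- `L¹`-approximate support uncertainty principle: if `A` is a `k`-Hadamard `m × n`
complex matrix, `v ≠ 0`, and `ε, η ∈ [0,1)`, then
`|supp¹_ε(v)| · |supp¹_η(Av)| ≥ k(1−ε)(1−η)`. -/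
theorem approx_support_uncertainty (m n : ℕ) (k : ℝ) (hk : 0 < k)
    (A : Matrix (Fin m) (Fin n) ℂ)
    (hbd : ∀ i j, ‖A i j‖ ≤ 1)
    (hHad : ∀ v : Fin n → ℂ, k * (⨆ i, ‖v i‖) ≤ ⨆ i, ‖(Aᴴ * A).mulVec v i‖)
    (v : Fin n → ℂ) (hv : v ≠ 0)
    (ε η : ℝ) (hε : ε ∈ Set.Ico (0 : ℝ) 1) (hη : η ∈ Set.Ico (0 : ℝ) 1) :
    k * (1 - ε) * (1 - η) ≤
      (suppSize1 ε v : ℝ) * (suppSize1 η (A.mulVec v) : ℝ) :=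
  approx_support_uncertainty_general m n k A hbd hHad v hv ε η hε hη
end

section
/- For real numbers a ≥ 1 and b ≥ 0, the function h(x) = (aˣ + b)^{1/x} is monotonically non-increasing for x ≥ 1. -/
open Real

lemma Real.rpow_add_le_rpow_add_of_one_le {A b t : ℝ} (hA : 1 ≤ A) (hb : 0 ≤ b) (ht : 1 ≤ t) :
    A ^ t + b ≤ (A + b) ^ t := by
  have hA₀ : 0 ≤ A := zero_le_one.trans hA
  have hAb₀ : 0 < A + b := by linarith
  have hpow : 1 ≤ A ^ (t - 1) := one_le_rpow hA (by linarith)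
  calc A ^ t + b = A ^ (t - 1) * A + b := by
          rw [← rpow_add_one (by linarith), sub_add_cancel]
    _ ≤ A ^ (t - 1) * (A + b) := by nlinarith
    _ ≤ (A + b) ^ (t - 1) * (A + b) := by
          gcongr
          linarith
    _ = (A + b) ^ t := by rw [← rpow_add_one hAb₀.ne', sub_add_cancel]

/-- For `a ≥ 1` and `b ≥ 0`, the function `h(x) = (aˣ + b)^{1/x}` is monotonically
non-increasing on `[1, ∞)`. -/
theorem rpow_sum_antitone (a b : ℝ) (ha : 1 ≤ a) (hb : 0 ≤ b) :
    AntitoneOn (fun x : ℝ => (a ^ x + b) ^ (1 / x)) (Set.Ici (1 : ℝ)) := by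
  intro x (hx : 1 ≤ x) y (hy : 1 ≤ y) hxy
  have hx₀ : 0 < x := by linarith
  have hy₀ : 0 < y := by linarith
  have ha₀ : 0 ≤ a := by linarith
  have hax : 1 ≤ a ^ x := one_le_rpow ha hx₀.le
  have hy_eq : a ^ y = (a ^ x) ^ (y / x) := by
    rw [← rpow_mul ha₀, mul_div_cancel₀ _ hx₀.ne']
  have key : a ^ y + b ≤ (a ^ x + b) ^ (y / x) := by
    rw [hy_eq]
    exact rpow_add_le_rpow_add_of_one_le hax hb ((one_le_div hx₀).mpr hxy)
  calc (a ^ y + b) ^ (1 / y) ≤ ((a ^ x + b) ^ (y / x)) ^ (1 / y) := by gcongr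
    _ = (a ^ x + b) ^ (1 / x) := by
          rw [← rpow_mul (by linarith)]
          congr 1
          field_simp
end

section
/- Let f : ℝ → ℂ be nonzero with f ∈ L¹(ℝ) and f̂ ∈ L¹(ℝ). Then λ(supp f) · λ(supp f̂) ≥ 1, where λ is Lebesgue measure and supp g = {x : g(x) ≠ 0}. -/
/-!
Both transforms are bounded by the `L¹` norm of the other one: `‖f̂‖∞ ≤ ‖f‖₁` everywhere, and
`f = 𝓕⁻ f̂` almost everywhere gives `|f| ≤ ‖f̂‖₁` a.e. Integrating these bounds over the supports,
`‖f̂‖₁ ≤ ‖f‖₁ λ(supp f̂)` and `‖f‖₁ ≤ ‖f̂‖₁ λ(supp f)`; chaining them and cancelling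
`0 < ‖f‖₁ < ∞` gives `1 ≤ λ(supp f) λ(supp f̂)`, in any finite-dimensional inner product space.
The almost-everywhere inversion formula follows by testing against smooth compactly supported
functions, which are Schwartz, so both transforms can be moved onto them by self-adjointness.
-/

open MeasureTheory FourierTransform Real
open scoped ContDiff SchwartzMap

section Fourier

variable {V F : Type*} [NormedAddCommGroup V] [InnerProductSpace ℝ V] [FiniteDimensional ℝ V]
  [MeasurableSpace V] [BorelSpace V] [NormedAddCommGroup F] [NormedSpace ℂ F]

theorem enorm_fourier_le_lintegral_enorm (f : V → F) (w : V) :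
    ‖𝓕 f w‖ₑ ≤ ∫⁻ v, ‖f v‖ₑ :=
  (enorm_integral_le_lintegral_enorm _).trans_eq (by simp_rw [← ofReal_norm, Circle.norm_smul])

theorem enorm_fourierInv_le_lintegral_enorm (f : V → F) (w : V) :
    ‖𝓕⁻ f w‖ₑ ≤ ∫⁻ v, ‖f v‖ₑ :=
  (enorm_integral_le_lintegral_enorm _).trans_eq (by simp_rw [← ofReal_norm, Circle.norm_smul])

variable [CompleteSpace F]

theorem integral_fourier_smul_eq_of_integrable {f : V → ℂ} {g : V → F} (hf : Integrable f)
    (hg : Integrable g) : ∫ ξ, 𝓕 f ξ • g ξ = ∫ x, f x • 𝓕 g x := by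
  simpa using! VectorFourier.integral_fourierIntegral_smul_eq_flip (L := innerₗ V)
    continuous_fourierChar continuous_inner hf hg

theorem integral_fourierInv_smul_eq_of_integrable {f : V → ℂ} {g : V → F} (hf : Integrable f)
    (hg : Integrable g) : ∫ ξ, 𝓕⁻ f ξ • g ξ = ∫ x, f x • 𝓕⁻ g x := by
  have hflip : (-innerₗ V).flip = -innerₗ V := by ext; simp [real_inner_comm]
  have := VectorFourier.integral_fourierIntegral_smul_eq_flip (L := -innerₗ V)
    continuous_fourierChar continuous_inner.neg hf hg
  rwa [hflip] at this

end Fourier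

namespace MeasureTheory.Integrable

variable {V : Type*} [NormedAddCommGroup V] [InnerProductSpace ℝ V] [FiniteDimensional ℝ V]
  [MeasurableSpace V] [BorelSpace V]

theorem integral_schwartz_mul_fourierInv_fourier {f : V → ℂ} (hf : Integrable f)
    (hFf : Integrable (𝓕 f)) (φ : 𝓢(V, ℂ)) :
    ∫ x, φ x * 𝓕⁻ (𝓕 f) x = ∫ x, φ x * f x := by
  have hφ : 𝓕 (𝓕⁻ ⇑φ) = ⇑φ := by
    rw [← SchwartzMap.fourierInv_coe, ← SchwartzMap.fourier_coe,
      FourierInvPair.fourier_fourierInv_eq]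
  calc ∫ x, φ x * 𝓕⁻ (𝓕 f) x
      = ∫ ξ, 𝓕 f ξ • 𝓕⁻ ⇑φ ξ := by
        simp_rw [mul_comm (φ _), ← smul_eq_mul]
        exact integral_fourierInv_smul_eq_of_integrable hFf φ.integrable
    _ = ∫ x, f x • 𝓕 (𝓕⁻ ⇑φ) x := by
        rw [← SchwartzMap.fourierInv_coe]
        exact integral_fourier_smul_eq_of_integrable hf (𝓕⁻ φ).integrable
    _ = ∫ x, φ x * f x := by simp_rw [hφ, smul_eq_mul, mul_comm]

theorem fourierInv_fourier_ae_eq {f : V → ℂ} (hf : Integrable f) (hFf : Integrable (𝓕 f)) :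
    𝓕⁻ (𝓕 f) =ᵐ[volume] f := by
  have hcont : Continuous (𝓕⁻ (𝓕 f)) :=
    VectorFourier.fourierIntegral_continuous continuous_fourierChar continuous_inner.neg hFf
  refine ae_eq_of_integral_contDiff_smul_eq hcont.locallyIntegrable hf.locallyIntegrable
    fun ψ hψ hψc => ?_
  have hφ : ContDiff ℝ ∞ fun x => (ψ x : ℂ) := Complex.ofRealCLM.contDiff.comp hψ
  simpa [Complex.real_smul] using
    hf.integral_schwartz_mul_fourierInv_fourier hFf
      ((hψc.comp_left Complex.ofReal_zero).toSchwartzMap hφ)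

end MeasureTheory.Integrable

theorem MeasureTheory.lintegral_enorm_le_mul_measure_support {α E : Type*} [MeasurableSpace α]
    {μ : Measure α} [NormedAddCommGroup E] {g : α → E} {C : ENNReal} (hg : ∀ᵐ x ∂μ, ‖g x‖ₑ ≤ C) :
    ∫⁻ x, ‖g x‖ₑ ∂μ ≤ C * μ (Function.support g) :=
  calc ∫⁻ x, ‖g x‖ₑ ∂μ
      ≤ ∫⁻ x, (Function.support g).indicator (fun _ => C) x ∂μ := by
        refine lintegral_mono_ae (hg.mono fun x hx => ?_)
        by_cases hx0 : g x = 0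
        · simp [hx0]
        · rwa [Set.indicator_of_mem (Function.mem_support.mpr hx0)]
    _ ≤ C * μ (Function.support g) := lintegral_indicator_const_le _ _

theorem one_le_volume_support_mul_volume_support_fourier {V : Type*} [NormedAddCommGroup V]
    [InnerProductSpace ℝ V] [FiniteDimensional ℝ V] [MeasurableSpace V] [BorelSpace V]
    {f : V → ℂ} (hf : Integrable f) (hFf : Integrable (𝓕 f)) (hne : ¬ f =ᵐ[volume] 0) :
    1 ≤ volume (Function.support f) * volume (Function.support (𝓕 f)) := by
  set A := ∫⁻ x, ‖f x‖ₑ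
  set B := ∫⁻ ξ, ‖𝓕 f ξ‖ₑ
  have hA0 : A ≠ 0 := fun h => hne <|
    ((lintegral_eq_zero_iff' hf.aestronglyMeasurable.enorm).mp h).mono fun _ => enorm_eq_zero.mp
  have hAB : A ≤ B * volume (Function.support f) :=
    lintegral_enorm_le_mul_measure_support <| (hf.fourierInv_fourier_ae_eq hFf).mono
      fun x hx => hx ▸ enorm_fourierInv_le_lintegral_enorm (𝓕 f) x
  have hBA : B ≤ A * volume (Function.support (𝓕 f)) :=
    lintegral_enorm_le_mul_measure_support <| ae_of_all _ <| enorm_fourier_le_lintegral_enorm f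
  refine (ENNReal.mul_le_mul_iff_right hA0 hf.hasFiniteIntegral.ne).mp ?_
  calc A * 1 = A := mul_one A
    _ ≤ B * volume (Function.support f) := hAB
    _ ≤ A * volume (Function.support (𝓕 f)) * volume (Function.support f) := by gcongr
    _ = A * (volume (Function.support f) * volume (Function.support (𝓕 f))) := by ring

/-- Matolcsi–Szűcs support uncertainty principle on `ℝ`: if `f ∈ L¹(ℝ)` is nonzero
(not a.e. zero) and its Fourier transform `f̂(ξ) = ∫ f(x) e^{−2πixξ} dx` is also in
`L¹(ℝ)`, then `λ(supp f) · λ(supp f̂) ≥ 1`. -/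
theorem support_uncertainty_real (f : ℝ → ℂ) (fhat : ℝ → ℂ)
    (hfhat : fhat = fun ξ : ℝ =>
      ∫ x : ℝ, Complex.exp (-2 * Real.pi * Complex.I * x * ξ) * f x)
    (hf : Integrable f) (hfhat1 : Integrable fhat)
    (hne : ¬ f =ᵐ[volume] 0) :
    1 ≤ volume (Function.support f) * volume (Function.support fhat) := by
  have hF : 𝓕 f = fhat := by
    ext ξ
    rw [hfhat, fourier_real_eq_integral_exp_smul]
    congr 1 with x
    push_cast
    ring_nf
  subst hF
  exact one_le_volume_support_mul_volume_support_fourier hf hfhat1 hne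
end

section
/- Let 1 < q ≤ ∞ and let g : ℝ → ℂ be a nonzero function in L¹(ℝ) ∩ L∞(ℝ) with finite variance V(g) = ∫ x²|g(x)|²dx. Then ‖g‖₁/‖g‖_q ≤ (2^{(5q−4)/(q−1)} · V(g)/‖g‖_q²)^{(q−1)/(3q−2)}. -/
/-!
Split `‖g‖₁` at a radius `R`. On `[-R, R]` Hölder's inequality gives at most
`‖g‖_q (2R)^{1-1/q}`; off it, Cauchy–Schwarz against the weight `1/|x|` gives at most
`(2/R)^{1/2} V(g)^{1/2}`. Choosing `R` so that the two terms are equal yields the bound.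
-/

open Real in
theorem div_le_of_forall_le_rpow_add_rpow {N₁ N V s : ℝ} (hN : 0 < N) (hV : 0 < V) (hs : s < 1)
    (h : ∀ R > 0, N₁ ≤ N * (2 * R) ^ (1 - s) + (2 / R) ^ (1 / 2 : ℝ) * V ^ (1 / 2 : ℝ)) :
    N₁ / N ≤ (2 ^ ((5 - 4 * s) / (1 - s)) * V / N ^ 2) ^ ((1 - s) / (3 - 2 * s)) := by
  set M := (2 ^ ((5 - 4 * s) / (1 - s)) * V / N ^ 2) ^ ((1 - s) / (3 - 2 * s))
  set R := (2 ^ (2 * s - 1) * V / N ^ 2) ^ (1 / (3 - 2 * s))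
  have h1s : 1 - s ≠ 0 := by linarith
  have h3s : 3 - 2 * s ≠ 0 := by linarith
  have h3s' : 3 - s * 2 ≠ 0 := by linarith
  have hR : 0 < R := by positivity
  have hM : 0 < M := by positivity
  have hlogR : log R = ((2 * s - 1) * log 2 + log V - 2 * log N) / (3 - 2 * s) := by
    simp only [R, log_rpow (by positivity : (0 : ℝ) < 2 ^ (2 * s - 1) * V / N ^ 2)]
    rw [log_div (by positivity) (by positivity), log_mul (by positivity) hV.ne', log_rpow two_pos,
      log_pow]
    push_cast; ring
  have hlogM : log M =
      ((5 - 4 * s) / (1 - s) * log 2 + log V - 2 * log N) * ((1 - s) / (3 - 2 * s)) := by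
    simp only [M, log_rpow (by positivity : (0 : ℝ) < 2 ^ ((5 - 4 * s) / (1 - s)) * V / N ^ 2)]
    rw [log_div (by positivity) (by positivity), log_mul (by positivity) hV.ne', log_rpow two_pos,
      log_pow]
    push_cast; ring
  -- `R` balances the two terms, each of which then equals `N * M / 2`.
  have hlocal : N * (2 * R) ^ (1 - s) = N * M / 2 := by
    refine log_injOn_pos (Set.mem_Ioi.mpr (by positivity)) (Set.mem_Ioi.mpr (by positivity)) ?_
    rw [log_mul hN.ne' (by positivity), log_rpow (by positivity), log_mul two_ne_zero hR.ne',
      log_div (by positivity) two_ne_zero, log_mul hN.ne' (by positivity), hlogR, hlogM]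
    field_simp
    ring
  have htail : (2 / R) ^ (1 / 2 : ℝ) * V ^ (1 / 2 : ℝ) = N * M / 2 := by
    refine log_injOn_pos (Set.mem_Ioi.mpr (by positivity)) (Set.mem_Ioi.mpr (by positivity)) ?_
    rw [log_mul (by positivity) (by positivity), log_rpow (by positivity), log_rpow hV,
      log_div two_ne_zero hR.ne', log_div (by positivity) two_ne_zero,
      log_mul hN.ne' (by positivity), hlogR, hlogM]
    field_simp
    ring
  rw [div_le_iff₀ hN]
  linarith [h R hR]

open MeasureTheory ENNReal Set

noncomputable def secondMoment {E : Type*} [NormedAddCommGroup E] (g : ℝ → E) : ℝ≥0∞ :=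
  ∫⁻ x, ENNReal.ofReal (x ^ 2 * ‖g x‖ ^ 2)

theorem setLIntegral_enorm_le_eLpNorm_mul_measure_rpow {α E : Type*} [MeasurableSpace α]
    [NormedAddCommGroup E] {μ : Measure α} {f : α → E} {q : ℝ≥0∞} (hq : 1 ≤ q)
    (hf : AEStronglyMeasurable f μ) (s : Set α) :
    ∫⁻ x in s, ‖f x‖ₑ ∂μ ≤ eLpNorm f q μ * μ s ^ (1 - q⁻¹.toReal) := by
  have holder := eLpNorm_le_eLpNorm_mul_rpow_measure_univ hq (hf.restrict (s := s))
  rw [eLpNorm_one_eq_lintegral_enorm, Measure.restrict_apply_univ] at holder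
  simp only [toReal_one, div_one, one_div, ← toReal_inv] at holder
  exact holder.trans (by gcongr; exact Measure.restrict_le_self)

theorem lintegral_Ioi_inv_sq {R : ℝ} (hR : 0 < R) :
    ∫⁻ x in Ioi R, ENNReal.ofReal (x ^ 2)⁻¹ = ENNReal.ofReal R⁻¹ := by
  have hpow : EqOn (fun x : ℝ => x ^ (-2 : ℝ)) (fun x => (x ^ 2)⁻¹) (Ioi R) := fun x hx => by
    simp [Real.rpow_neg (hR.trans hx).le]
  have hint : IntegrableOn (fun x : ℝ => (x ^ 2)⁻¹) (Ioi R) :=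
    (integrableOn_Ioi_rpow_of_lt (by norm_num) hR).congr_fun hpow measurableSet_Ioi
  rw [← ofReal_integral_eq_lintegral_ofReal hint (.of_forall fun x => by positivity),
    ← setIntegral_congr_fun measurableSet_Ioi hpow, integral_Ioi_rpow_of_lt (by norm_num) hR]
  norm_num [Real.rpow_neg_one]

theorem lintegral_compl_Icc_inv_sq {R : ℝ} (hR : 0 < R) :
    ∫⁻ x in (Icc (-R) R)ᶜ, ENNReal.ofReal (x ^ 2)⁻¹ = ENNReal.ofReal (2 / R) := by
  set h : ℝ → ℝ≥0∞ := fun x => ENNReal.ofReal (x ^ 2)⁻¹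
  have hsplit : (Icc (-R) R)ᶜ = Iio (-R) ∪ Ioi R := by
    ext x; simp only [mem_compl_iff, mem_Icc, mem_union, mem_Iio, mem_Ioi, not_and_or, not_le]
  have hdisj : Disjoint (Iio (-R)) (Ioi R) :=
    (Iic_disjoint_Ioi (by linarith)).mono_left Iio_subset_Iic_self
  have hneg : ∫⁻ x in Iio (-R), h x = ∫⁻ x in Ioi R, h x := by
    rw [← lintegral_indicator measurableSet_Iio, ← lintegral_indicator measurableSet_Ioi,
      ← lintegral_neg_eq_self]
    congr 1; ext x
    simp [h, indicator]
  rw [hsplit, lintegral_union measurableSet_Ioi hdisj, hneg, lintegral_Ioi_inv_sq hR,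
    ← ENNReal.ofReal_add (by positivity) (by positivity)]
  ring_nf

theorem setLIntegral_compl_Icc_enorm_le {E : Type*} [NormedAddCommGroup E] {g : ℝ → E}
    (hg : AEStronglyMeasurable g) {R : ℝ} (hR : 0 < R) :
    ∫⁻ x in (Icc (-R) R)ᶜ, ‖g x‖ₑ ≤
      ENNReal.ofReal (2 / R) ^ (1 / 2 : ℝ) * secondMoment g ^ (1 / 2 : ℝ) := by
  have hfactor : ∀ x ∈ (Icc (-R) R)ᶜ,
      ‖g x‖ₑ = ENNReal.ofReal |x|⁻¹ * ENNReal.ofReal (|x| * ‖g x‖) := fun x hx => by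
    have hx : x ≠ 0 := fun h => hx ⟨by linarith, by linarith⟩
    rw [← ENNReal.ofReal_mul (by positivity), inv_mul_cancel_left₀ (abs_ne_zero.mpr hx),
      ofReal_norm]
  have hsq_weight (x : ℝ) : ENNReal.ofReal |x|⁻¹ ^ (2 : ℝ) = ENNReal.ofReal (x ^ 2)⁻¹ := by
    rw [ENNReal.rpow_two, ← ENNReal.ofReal_pow (by positivity), inv_pow, sq_abs]
  have hsq_moment (x : ℝ) :
      ENNReal.ofReal (|x| * ‖g x‖) ^ (2 : ℝ) = ENNReal.ofReal (x ^ 2 * ‖g x‖ ^ 2) := by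
    rw [ENNReal.rpow_two, ← ENNReal.ofReal_pow (by positivity), mul_pow, sq_abs]
  have hmeas := hg.norm.aemeasurable
  calc ∫⁻ x in (Icc (-R) R)ᶜ, ‖g x‖ₑ
      = ∫⁻ x in (Icc (-R) R)ᶜ, ENNReal.ofReal |x|⁻¹ * ENNReal.ofReal (|x| * ‖g x‖) :=
        setLIntegral_congr_fun measurableSet_Icc.compl hfactor
    _ ≤ (∫⁻ x in (Icc (-R) R)ᶜ, ENNReal.ofReal |x|⁻¹ ^ (2 : ℝ)) ^ (1 / 2 : ℝ) *
          (∫⁻ x in (Icc (-R) R)ᶜ, ENNReal.ofReal (|x| * ‖g x‖) ^ (2 : ℝ)) ^ (1 / 2 : ℝ) :=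
        ENNReal.lintegral_mul_le_Lp_mul_Lq _ .two_two (by fun_prop) (by fun_prop)
    _ ≤ ENNReal.ofReal (2 / R) ^ (1 / 2 : ℝ) * secondMoment g ^ (1 / 2 : ℝ) := by
      simp only [hsq_weight, hsq_moment, lintegral_compl_Icc_inv_sq hR]
      gcongr
      exact setLIntegral_le_lintegral _ _

theorem eLpNorm_one_le_eLpNorm_add_secondMoment {E : Type*} [NormedAddCommGroup E] {g : ℝ → E}
    (hg : AEStronglyMeasurable g) {q : ℝ≥0∞} (hq : 1 ≤ q) {R : ℝ} (hR : 0 < R) :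
    eLpNorm g 1 ≤ eLpNorm g q * ENNReal.ofReal (2 * R) ^ (1 - q⁻¹.toReal) +
      ENNReal.ofReal (2 / R) ^ (1 / 2 : ℝ) * secondMoment g ^ (1 / 2 : ℝ) := by
  have hvol : volume (Icc (-R) R) = ENNReal.ofReal (2 * R) := by
    rw [Real.volume_Icc]; ring_nf
  rw [eLpNorm_one_eq_lintegral_enorm, ← lintegral_add_compl _ measurableSet_Icc, ← hvol]
  exact add_le_add (setLIntegral_enorm_le_eLpNorm_mul_measure_rpow hq hg _)
    (setLIntegral_compl_Icc_enorm_le hg hR)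

theorem ae_eq_zero_of_secondMoment_eq_zero {E : Type*} [NormedAddCommGroup E]
    {g : ℝ → E} (hg : AEStronglyMeasurable g)
    (h : secondMoment g = 0) : g =ᵐ[volume] 0 := by
  have hmeas := hg.norm.aemeasurable
  filter_upwards [(lintegral_eq_zero_iff' (by fun_prop)).mp h, Measure.ae_ne volume 0]
    with x hx hx0
  have : x ^ 2 * ‖g x‖ ^ 2 = 0 := le_antisymm (ENNReal.ofReal_eq_zero.mp hx) (by positivity)
  simpa [hx0] using this

theorem variance_norm_ratio_bound_general (q : ℝ≥0∞) (hq : 1 < q)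
    (g : ℝ → ℂ) (hg1 : Integrable g)
    (hV : (∫⁻ x : ℝ, ENNReal.ofReal (x ^ 2 * ‖g x‖ ^ 2)) ≠ ⊤) :
    eLpNorm g 1 volume / eLpNorm g q volume ≤
      ((2 : ℝ≥0∞) ^ ((5 - 4 * q⁻¹.toReal) / (1 - q⁻¹.toReal)) *
          (∫⁻ x : ℝ, ENNReal.ofReal (x ^ 2 * ‖g x‖ ^ 2)) /
          eLpNorm g q volume ^ 2) ^
        ((1 - q⁻¹.toReal) / (3 - 2 * q⁻¹.toReal)) := by
  change secondMoment g ≠ ⊤ at hV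
  change _ ≤ (_ * secondMoment g / _) ^ _
  set s := q⁻¹.toReal
  have hgm := hg1.aestronglyMeasurable
  have hs : s < 1 := toReal_lt_of_lt_ofReal (by simpa using ENNReal.inv_lt_one.mpr hq)
  -- In both degenerate cases the left side is `0`, as `0 / 0 = 0` and `a / ∞ = 0` in `ℝ≥0∞`.
  obtain hzero | hq0 := eq_or_ne (eLpNorm g q volume) 0
  · rw [eLpNorm_eq_zero_iff hgm (zero_lt_one.trans hq).ne'] at hzero
    simp [eLpNorm_congr_ae hzero]
  obtain htop | hqtop := eq_or_ne (eLpNorm g q volume) ⊤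
  · simp [htop]
  have hV0 : secondMoment g ≠ 0 := fun h => hq0 (by
    rw [eLpNorm_congr_ae (ae_eq_zero_of_secondMoment_eq_zero hgm h), eLpNorm_zero])
  have hN1 : eLpNorm g 1 volume ≠ ⊤ := (memLp_one_iff_integrable.mpr hg1).eLpNorm_ne_top
  have hreal := div_le_of_forall_le_rpow_add_rpow (N₁ := (eLpNorm g 1 volume).toReal)
    (toReal_pos hq0 hqtop) (toReal_pos hV0 hV) hs fun R hR => by
      have := ENNReal.toReal_mono (by finiteness)
        (eLpNorm_one_le_eLpNorm_add_secondMoment hgm hq.le hR)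
      rwa [toReal_add (by finiteness) (by finiteness), toReal_mul, toReal_mul, ← toReal_rpow,
        ← toReal_rpow, ← toReal_rpow, toReal_ofReal (by positivity),
        toReal_ofReal (by positivity)] at this
  have he2 : 0 ≤ (1 - s) / (3 - 2 * s) := div_nonneg (by linarith) (by linarith)
  rw [← toReal_le_toReal (by finiteness) (rpow_ne_top_of_nonneg he2 (by finiteness))]
  simpa [toReal_div, toReal_mul, ← toReal_rpow, toReal_pow] using hreal

/-- Variance bound on the `L¹/L^q` norm ratio: for `1 < q ≤ ∞` and a nonzero
`g ∈ L¹(ℝ) ∩ L∞(ℝ)` with finite variance `V(g) = ∫ x²|g(x)|² dx`,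
`‖g‖₁/‖g‖_q ≤ (2^{(5q−4)/(q−1)} · V(g)/‖g‖_q²)^{(q−1)/(3q−2)}`.
(Writing `s = 1/q ∈ [0,1)`, the exponents are `(5−4s)/(1−s)` and `(1−s)/(3−2s)`,
which for `q = ∞` give `5` and `1/3` as required.) -/
theorem variance_norm_ratio_bound (q : ℝ≥0∞) (hq : 1 < q)
    (g : ℝ → ℂ) (hg : g ≠ 0) (hg1 : Integrable g) (hg2 : MemLp g ⊤ volume)
    (hV : (∫⁻ x : ℝ, ENNReal.ofReal (x ^ 2 * ‖g x‖ ^ 2)) ≠ ⊤) :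
    eLpNorm g 1 volume / eLpNorm g q volume ≤
      ((2 : ℝ≥0∞) ^ ((5 - 4 * q⁻¹.toReal) / (1 - q⁻¹.toReal)) *
          (∫⁻ x : ℝ, ENNReal.ofReal (x ^ 2 * ‖g x‖ ^ 2)) /
          eLpNorm g q volume ^ 2) ^
        ((1 - q⁻¹.toReal) / (3 - 2 * q⁻¹.toReal)) :=
  variance_norm_ratio_bound_general q hq g hg1 hV
end
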